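/- Let f(r,θ) be defined for r ≥ R₀ and θ ∈ [0,A], twice differentiable in θ, such that ∂f/∂θ and ∂²f/∂θ² tend to zero uniformly as r → ∞. Then for every sufficiently large r, the curve θ ↦ (r cos θ, r sin θ, θ + f(r,θ)), θ ∈ [0,A], has total curvature strictly less than A. -/

import Mathlib

/-!
Along the curve, `c' = (-r sin θ, r cos θ, 1 + p)` and `c'' = (-r cos θ, -r sin θ, q)` with
`p = ∂f/∂θ`, `q = ∂²f/∂θ²`, so `|c' × c''|² = r²((1 + p)² + q²) + r⁴` and `|c'|² = r² + (1 + p)²`.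
Once `|p|, |q| ≤ 1/10`, the curvature density is at most `√(r⁴ + 1.22 r²) / (r² + 0.81)`, which is
`< 1` because `1.22 < 2 · 0.81`. A bound `< 1` independent of `θ` makes the integral over `[0, A]`
smaller than `A`.
-/

open Real

noncomputable section

/-- The cross product of two vectors in Euclidean 3-space. -/
def cross3 (v w : EuclideanSpace ℝ (Fin 3)) : EuclideanSpace ℝ (Fin 3) :=
  WithLp.toLp 2 ![v 1 * w 2 - v 2 * w 1, v 2 * w 0 - v 0 * w 2, v 0 * w 1 - v 1 * w 0]

/-- The almost-helical curve `θ ↦ (r cos θ, r sin θ, θ + f(r,θ))`. -/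
def helCurve (r : ℝ) (f : ℝ → ℝ → ℝ) : ℝ → EuclideanSpace ℝ (Fin 3) :=
  fun θ => WithLp.toLp 2 ![r * Real.cos θ, r * Real.sin θ, θ + f r θ]

theorem PiLp.hasDerivAt_toLp {ι : Type*} [Fintype ι] (p : ENNReal) [Fact (1 ≤ p)]
    {u : ℝ → ι → ℝ} {u' : ι → ℝ} {t : ℝ} (h : HasDerivAt u u' t) :
    HasDerivAt (fun x => WithLp.toLp p (u x)) (WithLp.toLp p u') t :=
  (PiLp.hasFDerivAt_toLp p (u t)).comp_hasDerivAt t h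

theorem intervalIntegral_lt_of_abs_le_of_lt {g : ℝ → ℝ} {a b K c : ℝ} (hab : a < b)
    (hg : ∀ x ∈ Set.Ioc a b, |g x| ≤ K) (hK : K < c) :
    ∫ x in a..b, g x < c * (b - a) := by
  have hbound := intervalIntegral.norm_integral_le_of_norm_le_const (f := g) (C := K)
    (by rwa [Set.uIoc_of_le hab.le])
  rw [abs_of_pos (sub_pos.2 hab)] at hbound
  calc ∫ x in a..b, g x ≤ ‖∫ x in a..b, g x‖ := le_abs_self _
    _ ≤ K * (b - a) := hbound
    _ < c * (b - a) := mul_lt_mul_of_pos_right hK (sub_pos.2 hab)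

/-- `κ · |c'|`, whose integral is the total curvature of `c`. -/
def curvatureDensity (c : ℝ → EuclideanSpace ℝ (Fin 3)) (θ : ℝ) : ℝ :=
  ‖cross3 (deriv c θ) (deriv (deriv c) θ)‖ / ‖deriv c θ‖ ^ 2

theorem norm_cross3_helix (r θ s t : ℝ) :
    ‖cross3 (WithLp.toLp 2 ![-(r * sin θ), r * cos θ, s])
        (WithLp.toLp 2 ![-(r * cos θ), -(r * sin θ), t])‖ = √(r ^ 2 * (s ^ 2 + t ^ 2) + r ^ 4) := by
  simp only [cross3, EuclideanSpace.norm_eq, Fin.sum_univ_three,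
    Matrix.cons_val_zero, Matrix.cons_val_one, Matrix.cons_val_two, Matrix.head_cons,
    Matrix.tail_cons, Real.norm_eq_abs, sq_abs]
  congr 1
  linear_combination (r ^ 2 * (s ^ 2 + t ^ 2) + r ^ 4 * (sin θ ^ 2 + cos θ ^ 2 + 1)) *
    sin_sq_add_cos_sq θ

theorem norm_sq_helix (r θ s : ℝ) :
    ‖(WithLp.toLp 2 ![-(r * sin θ), r * cos θ, s] : EuclideanSpace ℝ (Fin 3))‖ ^ 2 =
      r ^ 2 + s ^ 2 := by
  simp only [EuclideanSpace.norm_eq, Fin.sum_univ_three,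
    Matrix.cons_val_zero, Matrix.cons_val_one, Matrix.cons_val_two, Matrix.head_cons,
    Matrix.tail_cons, Real.norm_eq_abs, sq_abs]
  rw [sq_sqrt (by positivity)]
  linear_combination r ^ 2 * sin_sq_add_cos_sq θ

theorem helix_density_le (r p q : ℝ) (hp : |p| ≤ 1 / 10) (hq : |q| ≤ 1 / 10) :
    √(r ^ 2 * ((1 + p) ^ 2 + q ^ 2) + r ^ 4) / (r ^ 2 + (1 + p) ^ 2) ≤
      √(r ^ 4 + 122 / 100 * r ^ 2) / (r ^ 2 + 81 / 100) := by
  obtain ⟨hp₁, hp₂⟩ := abs_le.1 hp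
  obtain ⟨hq₁, hq₂⟩ := abs_le.1 hq
  have hq2 : q ^ 2 ≤ 1 / 100 := by nlinarith
  have hp2 : (1 + p) ^ 2 ≤ 121 / 100 := by nlinarith
  have hp3 : 81 / 100 ≤ (1 + p) ^ 2 := by nlinarith
  apply div_le_div₀ (sqrt_nonneg _) _ (by positivity) (by linarith)
  exact sqrt_le_sqrt (by nlinarith [sq_nonneg r])

theorem helix_density_bound_lt_one (r : ℝ) :
    √(r ^ 4 + 122 / 100 * r ^ 2) / (r ^ 2 + 81 / 100) < 1 := by
  rw [div_lt_one (by positivity), ← sqrt_sq (by positivity : (0 : ℝ) ≤ r ^ 2 + 81 / 100)]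
  exact sqrt_lt_sqrt (by positivity) (by nlinarith [sq_nonneg r])

section Helix

variable {r : ℝ} {f : ℝ → ℝ → ℝ}

theorem hasDerivAt_helCurve (hf : Differentiable ℝ (f r)) (θ : ℝ) :
    HasDerivAt (helCurve r f)
      (WithLp.toLp 2 ![-(r * sin θ), r * cos θ, 1 + deriv (f r) θ]) θ := by
  refine PiLp.hasDerivAt_toLp 2 (hasDerivAt_pi.2 fun i => ?_)
  fin_cases i
  · simpa using (hasDerivAt_cos θ).const_mul r
  · simpa using (hasDerivAt_sin θ).const_mul r
  · exact (hasDerivAt_id θ).add (hf θ).hasDerivAt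

theorem deriv_helCurve (hf : Differentiable ℝ (f r)) :
    deriv (helCurve r f) =
      fun θ => WithLp.toLp 2 ![-(r * sin θ), r * cos θ, 1 + deriv (f r) θ] :=
  funext fun θ => (hasDerivAt_helCurve hf θ).deriv

theorem deriv_deriv_helCurve (hf : ContDiff ℝ 2 (f r)) (θ : ℝ) :
    deriv (deriv (helCurve r f)) θ =
      WithLp.toLp 2 ![-(r * cos θ), -(r * sin θ), deriv (deriv (f r)) θ] := by
  have hf' : Differentiable ℝ (deriv (f r)) :=
    (hf.iterate_deriv' 1 1).differentiable one_ne_zero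
  rw [deriv_helCurve (hf.differentiable (by norm_num))]
  refine (PiLp.hasDerivAt_toLp 2 (hasDerivAt_pi.2 fun i => ?_)).deriv
  fin_cases i
  · exact ((hasDerivAt_sin θ).const_mul r).neg
  · simpa using (hasDerivAt_cos θ).const_mul r
  · simpa using (hf' θ).hasDerivAt

theorem curvatureDensity_helCurve (hf : ContDiff ℝ 2 (f r)) (θ : ℝ) :
    curvatureDensity (helCurve r f) θ =
      √(r ^ 2 * ((1 + deriv (f r) θ) ^ 2 + deriv (deriv (f r)) θ ^ 2) + r ^ 4) /
        (r ^ 2 + (1 + deriv (f r) θ) ^ 2) := by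
  rw [curvatureDensity, deriv_deriv_helCurve hf, deriv_helCurve (hf.differentiable (by norm_num)),
    norm_cross3_helix, norm_sq_helix]

end Helix

/-- Let `f(r,θ)` be defined for `r ≥ R₀` and `θ ∈ [0,A]`, twice differentiable in `θ`, such that
`∂f/∂θ` and `∂²f/∂θ²` tend to zero uniformly as `r → ∞`.  Then for every sufficiently large `r`,
the curve `θ ↦ (r cos θ, r sin θ, θ + f(r,θ))`, `θ ∈ [0,A]`, has total curvature strictly
less than `A`. -/
theorem stmt3 (A R₀ : ℝ) (hA : 0 < A) (f : ℝ → ℝ → ℝ)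
    (hf : ∀ r ≥ R₀, ContDiff ℝ 2 (f r))
    (hunif : ∀ ε > 0, ∃ R ≥ R₀, ∀ r ≥ R, ∀ θ ∈ Set.Icc (0 : ℝ) A,
      |deriv (f r) θ| < ε ∧ |deriv (deriv (f r)) θ| < ε) :
    ∃ R₁ ≥ R₀, ∀ r ≥ R₁,
      (∫ θ in (0:ℝ)..A,
          ‖cross3 (deriv (helCurve r f) θ) (deriv (deriv (helCurve r f)) θ)‖
            / ‖deriv (helCurve r f) θ‖ ^ 2) < A := by
  obtain ⟨R, hRR₀, hR⟩ := hunif (1 / 10) (by norm_num)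
  refine ⟨R, hRR₀, fun r hr => ?_⟩
  have hbound : ∀ θ ∈ Set.Ioc 0 A, |curvatureDensity (helCurve r f) θ| ≤
      √(r ^ 4 + 122 / 100 * r ^ 2) / (r ^ 2 + 81 / 100) := by
    intro θ hθ
    obtain ⟨hp, hq⟩ := hR r hr θ (Set.Ioc_subset_Icc_self hθ)
    rw [abs_of_nonneg (by unfold curvatureDensity; positivity),
      curvatureDensity_helCurve (hf r (hRR₀.trans hr))]
    exact helix_density_le r _ _ hp.le hq.le
  simpa [curvatureDensity] using
    intervalIntegral_lt_of_abs_le_of_lt hA hbound (helix_density_bound_lt_one r)
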